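/- arXiv:1605.08707 — 2 statements merged into one kernel-verified Lean document; each statement's English description precedes it below -/
import Mathlib

section
/- Let X be a bounded self-adjoint operator on a complex Hilbert space H, α ∈ H, and for k ≥ 0 set β_k = X^k α. Define h(s) = ⟨(X - is)⁻¹ α, α⟩ for s > 0, and set r_{2k-1}(s) = (is)^{-(2k-1)}‖β_{k-1}‖² and r_{2k}(s) = (is)^{-2k}⟨β_{k-1}, β_k⟩. Then for every N ≥ 1: h(s) + ∑_{k=1}^{2N-1} r_k(s) = (is)^{-2(N-1)} ⟨[(X - is)⁻¹ + (is)⁻¹] β_{N-1}, β_{N-1}⟩. -/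
open Complex Finset

/-- One-variable telescoping lemma (Lemma 3.1 specialized to `b_Y = 1`): with
`β_k = X^k α`, `h(s) = ⟨(X-is)⁻¹α, α⟩`, `r_{2k-1}(s) = (is)^{-(2k-1)}‖β_{k-1}‖²` and
`r_{2k}(s) = (is)^{-2k}⟨β_{k-1}, β_k⟩`, for every `N ≥ 1`:
`h(s) + ∑_{k=1}^{2N-1} r_k(s) = (is)^{-2(N-1)} ⟨[(X-is)⁻¹ + (is)⁻¹] β_{N-1}, β_{N-1}⟩`. -/
theorem stmt_7 {H : Type*} [NormedAddCommGroup H] [InnerProductSpace ℂ H] [CompleteSpace H]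
    (X : H →L[ℂ] H) (hX : IsSelfAdjoint X) (α : H) (s : ℝ) (hs : 0 < s)
    (β : ℕ → H) (hβ : ∀ k : ℕ, β k = (X ^ k) α)
    (r : ℕ → ℂ)
    (hrodd : ∀ k : ℕ, 1 ≤ k →
      r (2 * k - 1) = (((s : ℂ) * Complex.I) ^ (2 * k - 1))⁻¹ * (‖β (k - 1)‖ ^ 2 : ℝ))
    (hreven : ∀ k : ℕ, 1 ≤ k →
      r (2 * k) = (((s : ℂ) * Complex.I) ^ (2 * k))⁻¹ * (inner ℂ (β k) (β (k - 1)) : ℂ)) :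
    ∀ N : ℕ, 1 ≤ N →
      (inner ℂ α ((Ring.inverse (X - ((s : ℂ) * Complex.I) • 1)) α) : ℂ) +
        ∑ k ∈ Finset.Icc 1 (2 * N - 1), r k =
      ((((s : ℂ) * Complex.I) ^ (2 * (N - 1)))⁻¹) *
        (inner ℂ (β (N - 1))
          ((Ring.inverse (X - ((s : ℂ) * Complex.I) • 1) +
            (((s : ℂ) * Complex.I)⁻¹) • (1 : H →L[ℂ] H)) (β (N - 1))) : ℂ) := by
  set z : ℂ := (s : ℂ) * Complex.I with hzdef
  have hz : z ≠ 0 := by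
    simp [hzdef, Complex.ext_iff, hs.ne']
  set T : H →L[ℂ] H := X - z • 1 with hT
  -- invertibility
  have hzspec : z ∉ spectrum ℂ X := by
    intro h
    have := hX.im_eq_zero_of_mem_spectrum h
    simp [hzdef, Complex.mul_im] at this
    exact hs.ne' this
  have hunit : IsUnit T := by
    have h1 : IsUnit ((algebraMap ℂ (H →L[ℂ] H)) z - X) := spectrum.notMem_iff.mp hzspec
    have h2 : T = -((algebraMap ℂ (H →L[ℂ] H)) z - X) := by
      rw [Algebra.algebraMap_eq_smul_one]; simp [hT]
    rw [h2]; exact h1.neg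
  set R : H →L[ℂ] H := Ring.inverse T with hR
  have hTR : T * R = 1 := Ring.mul_inverse_cancel T hunit
  have hRT : R * T = 1 := Ring.inverse_mul_cancel T hunit
  -- pointwise facts
  have hTRv : ∀ v : H, X (R v) - z • (R v) = v := by
    intro v
    have := congrArg (fun A : H →L[ℂ] H => A v) hTR
    simpa [hT, ContinuousLinearMap.mul_apply] using this
  have hRX : ∀ v : H, R (X v) = X (R v) := by
    have hcomm : R * X = X * R := by
      have hXeq : X = T + z • 1 := by simp [hT]
      have h1 : R * X = 1 + z • R := by
        rw [hXeq, mul_add, hRT, mul_smul_comm, mul_one]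
      have h2 : X * R = 1 + z • R := by
        rw [hXeq, add_mul, hTR, smul_mul_assoc, one_mul]
      rw [h1, h2]
    intro v
    have := congrArg (fun A : H →L[ℂ] H => A v) hcomm
    simpa [ContinuousLinearMap.mul_apply] using this
  have hsym : ∀ a b : H, (inner ℂ (X a) b : ℂ) = inner ℂ a (X b) := fun a b => hX.isSymmetric a b
  clear_value z T R
  -- key scalar identity
  have key : ∀ v : H, (inner ℂ v ((R + z⁻¹ • (1 : H →L[ℂ] H)) v) : ℂ)
      = z⁻¹ * z⁻¹ * ((inner ℂ (X v) (R (X v)) : ℂ) - inner ℂ (X v) v) := by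
    intro v
    have hXRv : X (R v) = v + z • R v := by
      have := hTRv v; linear_combination (norm := module) this
    have h1 : R (X v) = X (R v) := hRX v
    calc (inner ℂ v ((R + z⁻¹ • (1 : H →L[ℂ] H)) v) : ℂ)
        = inner ℂ v (R v) + z⁻¹ * inner ℂ v v := by
          simp [ContinuousLinearMap.add_apply, ContinuousLinearMap.smul_apply,
            inner_add_right, inner_smul_right]
      _ = z⁻¹ * (inner ℂ v (X (R v)) : ℂ) := by
          rw [hXRv, inner_add_right, inner_smul_right]
          field_simp
          ring
      _ = z⁻¹ * (inner ℂ (X v) (R v) : ℂ) := by rw [hsym]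
      _ = z⁻¹ * z⁻¹ * ((inner ℂ (X v) (R (X v)) : ℂ) - inner ℂ (X v) v) := by
          rw [h1, hXRv, inner_add_right, inner_smul_right]
          field_simp
          ring
  -- beta recursion
  have hβs : ∀ k : ℕ, β (k + 1) = X (β k) := by
    intro k; rw [hβ, hβ, pow_succ']
    simp [ContinuousLinearMap.mul_apply]
  -- main induction
  intro N hN
  obtain ⟨M, rfl⟩ := Nat.exists_eq_add_of_le hN
  induction M with
  | zero =>
    have h1 : r 1 = z⁻¹ * (‖β 0‖ ^ 2 : ℝ) := by simpa using hrodd 1 le_rfl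
    have hb0 : β 0 = α := by simp [hβ]
    simp only [show 2 * (1 + 0) - 1 = 1 from rfl, Finset.Icc_self, Finset.sum_singleton,
      show (1 + 0) - 1 = 0 from rfl, h1, hb0]
    simp [ContinuousLinearMap.add_apply, ContinuousLinearMap.smul_apply,
      inner_add_right, inner_smul_right, inner_self_eq_norm_sq_to_K]
  | succ M ih =>
    have hsum : ∑ k ∈ Finset.Icc 1 (2 * (1 + (M + 1)) - 1), r k
        = (∑ k ∈ Finset.Icc 1 (2 * (1 + M) - 1), r k) + r (2 * M + 2) + r (2 * M + 3) := by
      have e1 : 2 * (1 + (M + 1)) - 1 = (2 * M + 2) + 1 := by omega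
      have e2 : 2 * (1 + M) - 1 = 2 * M + 1 := by omega
      rw [e1, e2, Finset.sum_Icc_succ_top (by omega), Finset.sum_Icc_succ_top (by omega)]
    have hr2 : r (2 * M + 2) = (z ^ (2 * M + 2))⁻¹ * (inner ℂ (β (M + 1)) (β M) : ℂ) := by
      have := hreven (M + 1) (by omega)
      simpa [show 2 * (M + 1) = 2 * M + 2 from by omega] using this
    have hr3 : r (2 * M + 3) = (z ^ (2 * M + 3))⁻¹ * (‖β (M + 1)‖ ^ 2 : ℝ) := by
      have := hrodd (M + 2) (by omega)
      simpa [show 2 * (M + 2) - 1 = 2 * M + 3 from by omega] using this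
    have eM : (1 + M) - 1 = M := by omega
    have eM1 : (1 + (M + 1)) - 1 = M + 1 := by omega
    rw [hsum, eM1]
    rw [eM] at ih
    have ih' := ih (by omega)
    rw [← add_assoc, ← add_assoc, ih']
    -- now pure algebra with key identity
    have hexp : (inner ℂ (β (M + 1)) ((R + z⁻¹ • (1 : H →L[ℂ] H)) (β (M + 1))) : ℂ)
        = inner ℂ (β (M + 1)) (R (β (M + 1))) + z⁻¹ * ((‖β (M + 1)‖ : ℂ) ^ 2) := by
      simp [ContinuousLinearMap.add_apply, ContinuousLinearMap.smul_apply,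
        inner_add_right, inner_smul_right, inner_self_eq_norm_sq_to_K]
    rw [key (β M), ← hβs M, hr2, hr3, hexp]
    have hzp : ∀ n : ℕ, (z : ℂ) ^ n ≠ 0 := fun n => pow_ne_zero n hz
    have h1 : (z ^ (2 * M + 2))⁻¹ = (z ^ (2 * M))⁻¹ * z⁻¹ * z⁻¹ := by
      rw [pow_add, mul_inv, sq, mul_inv, mul_assoc]
    have h2 : (z ^ (2 * M + 3))⁻¹ = (z ^ (2 * M))⁻¹ * z⁻¹ * z⁻¹ * z⁻¹ := by
      rw [pow_add, mul_inv, pow_succ, mul_inv, sq, mul_inv]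
      ring
    have h3 : (z ^ (2 * (M + 1)))⁻¹ = (z ^ (2 * M))⁻¹ * z⁻¹ * z⁻¹ := by
      rw [show 2 * (M + 1) = 2 * M + 2 from by omega]; exact h1
    rw [h1, h2, h3]
    push_cast
    ring
end

section
/- Let A be a self-adjoint bounded operator, Y a positive contraction (0 ≤ Y ≤ 1) on Hilbert space H, α ∈ H, and for z = (z₁, z₂) ∈ Π² set z_Y = z₁Y + z₂(1-Y). Then Im z_Y ≥ min(Im z₁, Im z₂)·I > 0, A - z_Y is invertible, and the function h(z₁,z₂) = ⟨(A - z_Y)⁻¹ α, α⟩ maps Π² into the closed upper half plane. -/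
open Complex
open scoped InnerProductSpace

/-!
Because `Y` and `1 - Y` are positive, `⟪v, z_Y v⟫ = z₁ a + z₂ b` with real weights `a, b ≥ 0`
summing to `‖v‖²`, which gives the lower bound on `Im ⟪v, z_Y v⟫`. The self-adjoint `A` adds
nothing to the imaginary part, so the numerical range of `A - z_Y` stays at distance
`min (Im z₁) (Im z₂)` from `0`; by Cauchy–Schwarz such an operator is bounded below, and its
range has trivial orthogonal complement, hence it is invertible. Finally, for `β = (A - z_Y)⁻¹ α` we have
`Im ⟪α, β⟫ = -Im ⟪β, (A - z_Y) β⟫ = Im ⟪β, z_Y β⟫ ≥ 0`.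
-/

namespace ContinuousLinearMap

variable {𝕜 E : Type*} [RCLike 𝕜] [NormedAddCommGroup E] [InnerProductSpace 𝕜 E]

theorem mul_norm_le_norm_apply_of_mul_norm_sq_le_norm_inner {T : E →L[𝕜] E} {c : ℝ}
    (hT : ∀ v, c * ‖v‖ ^ 2 ≤ ‖⟪v, T v⟫_𝕜‖) (v : E) : c * ‖v‖ ≤ ‖T v‖ := by
  rcases (norm_nonneg v).eq_or_lt with hv | hv
  · simp [← hv]
  · refine le_of_mul_le_mul_right ?_ hv
    calc c * ‖v‖ * ‖v‖ = c * ‖v‖ ^ 2 := by ring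
      _ ≤ ‖⟪v, T v⟫_𝕜‖ := hT v
      _ ≤ ‖v‖ * ‖T v‖ := norm_inner_le_norm v (T v)
      _ = ‖T v‖ * ‖v‖ := mul_comm _ _

theorem isUnit_of_mul_norm_sq_le_norm_inner [CompleteSpace E] {T : E →L[𝕜] E} {c : ℝ}
    (hc : 0 < c) (hT : ∀ v, c * ‖v‖ ^ 2 ≤ ‖⟪v, T v⟫_𝕜‖) : IsUnit T := by
  have hanti : AntilipschitzWith (Real.toNNReal c)⁻¹ T := by
    refine T.antilipschitz_of_bound fun v => ?_
    rw [NNReal.coe_inv, Real.coe_toNNReal c hc.le, inv_mul_eq_div, le_div_iff₀' hc]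
    exact mul_norm_le_norm_apply_of_mul_norm_sq_le_norm_inner hT v
  have hclosed : IsClosed (T.range : Set E) := by
    rw [LinearMap.coe_range]
    exact hanti.isClosed_range T.uniformContinuous
  have : CompleteSpace T.range := hclosed.completeSpace_coe
  have hrange : T.range = ⊤ := by
    refine Submodule.orthogonal_eq_bot_iff.mp <| (Submodule.eq_bot_iff _).mpr fun w hw => ?_
    have hzero : ⟪w, T w⟫_𝕜 = 0 := by
      rw [← inner_conj_symm, (Submodule.mem_orthogonal _ w).mp hw (T w) ⟨w, rfl⟩, map_zero]
    have hw : c * ‖w‖ ^ 2 ≤ 0 := by simpa [hzero] using hT w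
    have hw' : ‖w‖ ^ 2 = 0 := le_antisymm (nonpos_of_mul_nonpos_right hw hc) (sq_nonneg _)
    simpa using hw'
  exact isUnit_iff_bijective.mpr ⟨hanti.injective, LinearMap.range_eq_top.mp hrange⟩

theorem im_inner_inverse_apply_nonneg {T : E →L[𝕜] E} (hunit : IsUnit T)
    (hT : ∀ v, RCLike.im ⟪v, T v⟫_𝕜 ≤ 0) (α : E) :
    0 ≤ RCLike.im ⟪α, Ring.inverse T α⟫_𝕜 := by
  set β := Ring.inverse T α
  have hβ : T β = α := congrArg (· α) (Ring.mul_inverse_cancel T hunit)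
  rw [← hβ, ← inner_conj_symm, RCLike.conj_im, neg_nonneg]
  exact hT β

end ContinuousLinearMap

namespace ContinuousLinearMap

variable {H : Type*} [NormedAddCommGroup H] [InnerProductSpace ℂ H]

theorem im_inner_self_apply_of_isSymmetric {T : H →L[ℂ] H}
    (hT : (T : H →ₗ[ℂ] H).IsSymmetric) (v : H) : (⟪v, T v⟫_ℂ).im = 0 :=
  hT.im_inner_self_apply v

theorem min_im_mul_norm_sq_le_im_inner_smul_add_smul_one_sub {Y : H →L[ℂ] H}
    (hY₀ : Y.IsPositive) (hY₁ : (1 - Y).IsPositive) (z₁ z₂ : ℂ) (v : H) :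
    min z₁.im z₂.im * ‖v‖ ^ 2 ≤ (⟪v, (z₁ • Y + z₂ • (1 - Y)) v⟫_ℂ).im := by
  have hsum : (⟪v, Y v⟫_ℂ).re + (⟪v, (1 - Y) v⟫_ℂ).re = ‖v‖ ^ 2 := by
    rw [← add_re, ← inner_add_right, ← add_apply Y, add_sub_cancel, one_apply_eq_self,
      inner_self_eq_norm_sq_to_K]
    norm_cast
  have him : (⟪v, (z₁ • Y + z₂ • (1 - Y)) v⟫_ℂ).im
      = z₁.im * (⟪v, Y v⟫_ℂ).re + z₂.im * (⟪v, (1 - Y) v⟫_ℂ).re := by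
    simp only [add_apply, smul_apply, inner_add_right, inner_smul_right, add_im, mul_im,
      im_inner_self_apply_of_isSymmetric hY₀.isSymmetric,
      im_inner_self_apply_of_isSymmetric hY₁.isSymmetric]
    ring
  have ha := hY₀.re_inner_nonneg_right v
  have hb := hY₁.re_inner_nonneg_right v
  rw [him, ← hsum, mul_add]
  gcongr
  exacts [min_le_left _ _, min_le_right _ _]

end ContinuousLinearMap

/-- Type I Nevanlinna representations give two-variable Pick functions: for `A`
self-adjoint, `Y` a positive contraction, `z = (z₁,z₂) ∈ Π²` and
`z_Y = z₁Y + z₂(1-Y)`, the imaginary part of the quadratic form of `z_Y` is bounded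
below by `min(Im z₁, Im z₂)‖v‖²`, `A - z_Y` is invertible, and
`h(z) = ⟨(A - z_Y)⁻¹α, α⟩` has nonnegative imaginary part. -/
theorem stmt_11 {H : Type*} [NormedAddCommGroup H] [InnerProductSpace ℂ H] [CompleteSpace H]
    (A Y : H →L[ℂ] H) (hA : IsSelfAdjoint A)
    (hY₀ : Y.IsPositive) (hY₁ : ((1 : H →L[ℂ] H) - Y).IsPositive)
    (α : H) (z₁ z₂ : ℂ) (hz₁ : 0 < z₁.im) (hz₂ : 0 < z₂.im) :
    (∀ v : H, min z₁.im z₂.im * ‖v‖ ^ 2 ≤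
        ((inner ℂ v ((z₁ • Y + z₂ • ((1 : H →L[ℂ] H) - Y)) v) : ℂ)).im) ∧
    IsUnit (A - (z₁ • Y + z₂ • ((1 : H →L[ℂ] H) - Y))) ∧
    0 ≤ ((inner ℂ α ((Ring.inverse (A - (z₁ • Y + z₂ • ((1 : H →L[ℂ] H) - Y)))) α) : ℂ)).im := by
  set S : H →L[ℂ] H := z₁ • Y + z₂ • (1 - Y)
  have hm : 0 < min z₁.im z₂.im := lt_min hz₁ hz₂
  have hS :=
    ContinuousLinearMap.min_im_mul_norm_sq_le_im_inner_smul_add_smul_one_sub hY₀ hY₁ z₁ z₂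
  have him (v : H) : (⟪v, (A - S) v⟫_ℂ).im = -(⟪v, S v⟫_ℂ).im := by
    rw [sub_apply, inner_sub_right, sub_im,
      ContinuousLinearMap.im_inner_self_apply_of_isSymmetric hA.isSymmetric, zero_sub]
  have hunit : IsUnit (A - S) := by
    refine ContinuousLinearMap.isUnit_of_mul_norm_sq_le_norm_inner hm fun v => ?_
    calc min z₁.im z₂.im * ‖v‖ ^ 2 ≤ |(⟪v, (A - S) v⟫_ℂ).im| := by
          rw [him, abs_neg]; exact (hS v).trans (le_abs_self _)
      _ ≤ ‖⟪v, (A - S) v⟫_ℂ‖ := abs_im_le_norm _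
  refine ⟨hS, hunit, ContinuousLinearMap.im_inner_inverse_apply_nonneg hunit (fun v => ?_) α⟩
  rw [RCLike.im_to_complex, him, neg_nonpos]
  exact (mul_nonneg hm.le (sq_nonneg _)).trans (hS v)
end
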